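/- Let (Ω, P) be a probability space and let X₀, X₁, …, X_{n−1} : Ω → ℝ (n ≥ 1) be mutually independent random variables, all having the same atomless distribution μ. Then the expected number of strict records among X₀, …, X_{n−1}, i.e. E[#{k < n : X_j < X_k for all j < k}], equals the harmonic sum ∑_{k=1}^{n} 1/k. -/

import Mathlib

open MeasureTheory ProbabilityTheory
open scoped BigOperators ENNReal

section Aux

variable {Ω : Type*} [MeasurableSpace Ω]

/-- Joint law of finitely many independent random variables is the product measure. -/
lemma joint_law_pi (P : Measure Ω) [IsProbabilityMeasure P] {n : ℕ}
    (X : Fin n → Ω → ℝ) (μ : Measure ℝ) [IsProbabilityMeasure μ]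
    (hmeas : ∀ i, Measurable (X i))
    (hindep : iIndepFun X P)
    (hdist : ∀ i, P.map (X i) = μ) :
    P.map (fun ω i => X i ω) = Measure.pi (fun _ => μ) := by
  have hJ : Measurable (fun ω (i : Fin n) => X i ω) :=
    measurable_pi_lambda _ (fun i => hmeas i)
  refine (Measure.pi_eq (μ := fun _ : Fin n => μ) fun s hs => ?_).symm
  rw [Measure.map_apply hJ (MeasurableSet.univ_pi hs)]
  have hpre : (fun ω (i : Fin n) => X i ω) ⁻¹' (Set.univ.pi s)
      = ⋂ i ∈ Finset.univ, X i ⁻¹' s i := by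
    ext ω; simp [Set.mem_pi]
  rw [hpre, hindep.measure_inter_preimage_eq_mul Finset.univ (fun i _ => hs i)]
  refine Finset.prod_congr rfl fun i _ => ?_
  rw [← hdist i, Measure.map_apply (hmeas i) (hs i)]

end Aux

/-- The product measure gives measure `1/(k+1)` to the event that the `k`-th coordinate is
a strict record. -/
lemma pi_record_measure {n : ℕ} (μ : Measure ℝ) [IsProbabilityMeasure μ]
    (k : Fin n)
    (hdiag : ∀ i j : Fin n, i ≠ j →
      (Measure.pi (fun _ : Fin n => μ)) {x | x i = x j} = 0) :
    (Measure.pi (fun _ : Fin n => μ)) {x | ∀ j : Fin n, j < k → x j < x k}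
      = ((k : ℕ) + 1 : ℝ≥0∞)⁻¹ := by
  classical
  set ν : Measure (Fin n → ℝ) := Measure.pi (fun _ : Fin n => μ) with hν
  haveI : IsProbabilityMeasure ν := by rw [hν]; infer_instance
  set A : Fin n → Set (Fin n → ℝ) :=
    fun i => {x | ∀ j : Fin n, j ≤ k → j ≠ i → x j < x i} with hA
  have hAmeas : ∀ i, MeasurableSet (A i) := by
    intro i
    have : A i = ⋂ j : Fin n, ⋂ (_ : j ≤ k), ⋂ (_ : j ≠ i), {x : Fin n → ℝ | x j < x i} := by
      ext x; simp [hA]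
    rw [this]
    exact MeasurableSet.iInter fun j => MeasurableSet.iInter fun _ =>
      MeasurableSet.iInter fun _ =>
        measurableSet_lt (measurable_pi_apply j) (measurable_pi_apply i)
  -- symmetry: all A i for i ≤ k have the same measure
  have hsymm : ∀ i : Fin n, i ≤ k → ν (A i) = ν (A k) := by
    intro i hik
    rcases eq_or_ne i k with rfl | hne
    · rfl
    set σ : Equiv.Perm (Fin n) := Equiv.swap i k with hσ
    have hmp : MeasurePreserving (MeasurableEquiv.piCongrLeft (fun _ : Fin n => ℝ) σ.symm) ν ν :=
      measurePreserving_piCongrLeft (fun _ : Fin n => μ) σ.symm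
    set T := MeasurableEquiv.piCongrLeft (fun _ : Fin n => ℝ) σ.symm with hT
    have hTapp : ∀ (x : Fin n → ℝ) (b : Fin n), T x b = x (σ b) := by
      intro x b
      have := MeasurableEquiv.piCongrLeft_apply_apply σ.symm (β := fun _ : Fin n => ℝ) x (σ b)
      simp at this
      exact this
    have hpre : T ⁻¹' (A i) = A k := by
      ext x
      simp only [Set.mem_preimage, hA, Set.mem_setOf_eq]
      constructor
      · intro h j hjk hjne
        have h1 : σ j ≤ k := by
          rcases eq_or_ne j i with rfl | hji
          · simpa [hσ, Equiv.swap_apply_left] using le_refl k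
          · rw [hσ, Equiv.swap_apply_of_ne_of_ne hji hjne]; exact hjk
        have h2 : σ j ≠ i := fun hc =>
          hjne (σ.injective (hc.trans (Equiv.swap_apply_right i k).symm))
        have := h (σ j) h1 h2
        rw [hTapp, hTapp] at this
        simpa [hσ, Equiv.swap_apply_self, Equiv.swap_apply_left] using this
      · intro h j hjk hjne
        rw [hTapp, hTapp]
        have hσi : σ i = k := by rw [hσ]; exact Equiv.swap_apply_left i k
        rw [hσi]
        have h1 : σ j ≤ k := by
          rcases eq_or_ne j k with rfl | hjk'
          · rw [hσ, Equiv.swap_apply_right]; exact hik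
          · rw [hσ, Equiv.swap_apply_of_ne_of_ne hjne hjk']; exact hjk
        have h2 : σ j ≠ k := fun hc =>
          hjne (σ.injective (hc.trans (Equiv.swap_apply_left i k).symm))
        exact h (σ j) h1 h2
    calc ν (A i) = ν (T ⁻¹' (A i)) := (hmp.measure_preimage (hAmeas i).nullMeasurableSet).symm
    _ = ν (A k) := by rw [hpre]
  -- the sets are pairwise disjoint on Iic k
  have hdisj : (↑(Finset.Iic k) : Set (Fin n)).PairwiseDisjoint A := by
    intro i hi j hj hij
    refine Set.disjoint_left.2 fun x hxi hxj => ?_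
    simp only [Finset.coe_Iic, Set.mem_Iic] at hi hj
    have h1 := hxi j hj (Ne.symm hij)
    have h2 := hxj i hi hij
    exact absurd (h1.trans h2) (lt_irrefl _)
  -- the union has full measure
  have hN : ν (⋃ (i : Fin n) (j : Fin n) (_ : i ≠ j), {x : Fin n → ℝ | x i = x j}) = 0 := by
    refine measure_iUnion_null fun i => measure_iUnion_null fun j => measure_iUnion_null fun hij => ?_
    exact hdiag i j hij
  have hcover : (Set.univ : Set (Fin n → ℝ)) ⊆
      (⋃ i ∈ Finset.Iic k, A i) ∪
      (⋃ (i : Fin n) (j : Fin n) (_ : i ≠ j), {x : Fin n → ℝ | x i = x j}) := by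
    intro x _
    by_cases hx : ∃ i j : Fin n, i ≠ j ∧ x i = x j
    · rcases hx with ⟨i, j, hij, hxij⟩
      exact Or.inr (Set.mem_iUnion.2 ⟨i, Set.mem_iUnion.2 ⟨j, Set.mem_iUnion.2 ⟨hij, hxij⟩⟩⟩)
    · push_neg at hx
      obtain ⟨i, hi, hmax⟩ := Finset.exists_max_image (Finset.Iic k) x ⟨k, Finset.mem_Iic.2 le_rfl⟩
      refine Or.inl (Set.mem_biUnion hi ?_)
      intro j hj hji
      have hle := hmax j (Finset.mem_Iic.2 hj)
      exact lt_of_le_of_ne hle (hx j i hji)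
  have hU : ν (⋃ i ∈ Finset.Iic k, A i) = 1 := by
    refine le_antisymm (measure_mono (Set.subset_univ _) |>.trans (le_of_eq measure_univ)) ?_
    have h1 : (1 : ℝ≥0∞) = ν Set.univ := measure_univ.symm
    rw [h1]
    calc ν Set.univ ≤ ν ((⋃ i ∈ Finset.Iic k, A i) ∪ _) := measure_mono hcover
    _ ≤ ν (⋃ i ∈ Finset.Iic k, A i) +
        ν (⋃ (i : Fin n) (j : Fin n) (_ : i ≠ j), {x : Fin n → ℝ | x i = x j}) := measure_union_le _ _
    _ = ν (⋃ i ∈ Finset.Iic k, A i) := by rw [hN, add_zero]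
  have hsum : ∑ i ∈ Finset.Iic k, ν (A i) = 1 := by
    rw [← measure_biUnion_finset hdisj (fun i _ => hAmeas i), hU]
  have hsum2 : ∑ i ∈ Finset.Iic k, ν (A i) = ((k : ℕ) + 1 : ℝ≥0∞) * ν (A k) := by
    rw [Finset.sum_congr rfl (fun i hi => hsymm i (Finset.mem_Iic.1 hi)),
      Finset.sum_const, Fin.card_Iic, nsmul_eq_mul, Nat.cast_add, Nat.cast_one]
  have hsum' : ((k : ℕ) + 1 : ℝ≥0∞) * ν (A k) = 1 := by rw [← hsum2, hsum]
  have hAk : ν (A k) = ((k : ℕ) + 1 : ℝ≥0∞)⁻¹ := by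
    have hc0 : ((k : ℕ) + 1 : ℝ≥0∞) ≠ 0 := by simp
    have hct : ((k : ℕ) + 1 : ℝ≥0∞) ≠ ⊤ := by
      simp [ENNReal.add_ne_top]
    calc ν (A k) = (((k : ℕ) + 1 : ℝ≥0∞)⁻¹ * (((k : ℕ) + 1 : ℝ≥0∞))) * ν (A k) := by
          rw [ENNReal.inv_mul_cancel hc0 hct, one_mul]
    _ = ((k : ℕ) + 1 : ℝ≥0∞)⁻¹ * ((((k : ℕ) + 1 : ℝ≥0∞)) * ν (A k)) := by ring
    _ = ((k : ℕ) + 1 : ℝ≥0∞)⁻¹ := by rw [hsum', mul_one]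
  have hset : {x : Fin n → ℝ | ∀ j : Fin n, j < k → x j < x k} = A k := by
    ext x
    simp only [hA, Set.mem_setOf_eq]
    constructor
    · intro h j hjk hjne
      exact h j (lt_of_le_of_ne hjk hjne)
    · intro h j hjk
      exact h j hjk.le hjk.ne
  rw [hset]
  exact hAk

/-- If `X 0, …, X (n−1)` (with `n ≥ 1`) are mutually independent random variables with a
common atomless distribution `μ`, then the expected number of strict records among them
equals the harmonic sum `∑_{k=1}^{n} 1/k`. -/
theorem expected_number_of_records {Ω : Type*} [MeasurableSpace Ω] (P : Measure Ω)
    [IsProbabilityMeasure P] (n : ℕ) (hn : 1 ≤ n)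
    (X : Fin n → Ω → ℝ) (μ : Measure ℝ) [NullSingletonClass μ]
    (hmeas : ∀ i, Measurable (X i))
    (hindep : iIndepFun X P)
    (hdist : ∀ i, P.map (X i) = μ) :
    ∫ ω, ((Finset.univ.filter
        (fun k : Fin n => ∀ j : Fin n, j < k → X j ω < X k ω)).card : ℝ) ∂P =
      ∑ k ∈ Finset.range n, 1 / ((k : ℝ) + 1) := by
  classical
  haveI : IsProbabilityMeasure μ := by
    rw [← hdist ⟨0, hn⟩]
    exact Measure.isProbabilityMeasure_map (hmeas _).aemeasurable
  set R : Fin n → Set Ω := fun k => {ω | ∀ j : Fin n, j < k → X j ω < X k ω} with hR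
  have hRmeas : ∀ k, MeasurableSet (R k) := by
    intro k
    have : R k = ⋂ j : Fin n, ⋂ (_ : j < k), {ω | X j ω < X k ω} := by
      ext ω; simp [hR]
    rw [this]
    exact MeasurableSet.iInter fun j => MeasurableSet.iInter fun _ =>
      measurableSet_lt (hmeas j) (hmeas k)
  -- step 1 : expand into a sum of indicators
  have hcard : ∀ ω, ((Finset.univ.filter
      (fun k : Fin n => ∀ j : Fin n, j < k → X j ω < X k ω)).card : ℝ)
      = ∑ k : Fin n, (R k).indicator (1 : Ω → ℝ) ω := by
    intro ω
    rw [Finset.card_filter]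
    push_cast
    refine Finset.sum_congr rfl fun k _ => ?_
    rw [Set.indicator_apply]
    simp only [hR, Set.mem_setOf_eq, Pi.one_apply]
    try exact if_congr Iff.rfl rfl rfl
  have hint : ∀ k : Fin n, Integrable ((R k).indicator (1 : Ω → ℝ)) P :=
    fun k => (integrable_const 1).indicator (hRmeas k)
  calc ∫ ω, ((Finset.univ.filter
        (fun k : Fin n => ∀ j : Fin n, j < k → X j ω < X k ω)).card : ℝ) ∂P
      = ∫ ω, ∑ k : Fin n, (R k).indicator (1 : Ω → ℝ) ω ∂P := by
        exact integral_congr_ae (Filter.Eventually.of_forall hcard)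
    _ = ∑ k : Fin n, ∫ ω, (R k).indicator (1 : Ω → ℝ) ω ∂P :=
        integral_finset_sum _ (fun k _ => hint k)
    _ = ∑ k : Fin n, (P (R k)).toReal := by
        refine Finset.sum_congr rfl fun k _ => ?_
        rw [integral_indicator_one (hRmeas k), measureReal_def]
    _ = ∑ k ∈ Finset.range n, 1 / ((k : ℝ) + 1) := by
        have hjoint := joint_law_pi P X μ hmeas hindep hdist
        have hJ : Measurable (fun ω (i : Fin n) => X i ω) :=
          measurable_pi_lambda _ (fun i => hmeas i)
        have hdiag : ∀ i j : Fin n, i ≠ j →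
            (Measure.pi (fun _ : Fin n => μ)) {x | x i = x j} = 0 := by
          intro i j hij
          have hD : MeasurableSet {x : Fin n → ℝ | x i = x j} :=
            measurableSet_eq_fun (measurable_pi_apply i) (measurable_pi_apply j)
          rw [← hjoint, Measure.map_apply hJ hD]
          have hpair : P.map (fun ω => (X i ω, X j ω)) = μ.prod μ := by
            have := (indepFun_iff_map_prod_eq_prod_map_map (hmeas i).aemeasurable
              (hmeas j).aemeasurable).1 (hindep.indepFun hij)
            rwa [hdist i, hdist j] at this
          have hdiagset : MeasurableSet {p : ℝ × ℝ | p.1 = p.2} :=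
            measurableSet_eq_fun measurable_fst measurable_snd
          have hpre : (fun ω (i : Fin n) => X i ω) ⁻¹' {x | x i = x j}
              = (fun ω => (X i ω, X j ω)) ⁻¹' {p : ℝ × ℝ | p.1 = p.2} := rfl
          rw [hpre, ← Measure.map_apply ((hmeas i).prodMk (hmeas j)) hdiagset, hpair]
          rw [Measure.prod_apply hdiagset]
          have hfib : ∀ x : ℝ, μ (Prod.mk x ⁻¹' {p : ℝ × ℝ | p.1 = p.2}) = 0 := by
            intro x
            have : Prod.mk x ⁻¹' {p : ℝ × ℝ | p.1 = p.2} = {x} := by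
              ext y; simp [eq_comm]
            rw [this, measure_singleton]
          simp [hfib]
        have hPR : ∀ k : Fin n, P (R k) = ((k : ℕ) + 1 : ℝ≥0∞)⁻¹ := by
          intro k
          have hBmeas : MeasurableSet {x : Fin n → ℝ | ∀ j : Fin n, j < k → x j < x k} := by
            have : {x : Fin n → ℝ | ∀ j : Fin n, j < k → x j < x k}
                = ⋂ j : Fin n, ⋂ (_ : j < k), {x : Fin n → ℝ | x j < x k} := by
              ext x; simp
            rw [this]
            exact MeasurableSet.iInter fun j => MeasurableSet.iInter fun _ =>
              measurableSet_lt (measurable_pi_apply j) (measurable_pi_apply k)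
          have hPB : P (R k)
              = (P.map (fun ω (i : Fin n) => X i ω))
                  {x | ∀ j : Fin n, j < k → x j < x k} := by
            rw [Measure.map_apply hJ hBmeas]
            try rfl
          rw [hPB, hjoint, pi_record_measure μ k hdiag]
        have h1 : ∀ k : Fin n, (P (R k)).toReal = 1 / (((k : ℕ) : ℝ) + 1) := by
          intro k
          rw [hPR k]
          simp only [ENNReal.toReal_inv, one_div]
          congr 1
        rw [Finset.sum_congr rfl (fun k _ => h1 k)]
        exact Fin.sum_univ_eq_sum_range (fun k => 1 / ((k : ℝ) + 1)) n
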